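/- If u : 𝔻 → ℝ is harmonic with u(0) = 0 and |u| < 1 on 𝔻, then ‖∇u(0)‖ ≤ 4/π. -/

import Mathlib

/-!
On the disc `u = Re F` with `F` holomorphic, and `‖∇u(0)‖ = |F'(0)|`. On the circle of radius
`r`, the average of `z⁻¹ u(z)` is `F'(0) / 2`: the part `z⁻¹ F(z)` averages to `F'(0)` by Cauchy's
formula, while `z⁻¹ conj F(z) = conj (z F(z)) / r²` averages to `0` by the mean value property.
Testing this average against the unit vector that makes it real and using `|u| < 1` bounds it by
the average of `|cos θ| / r`, that is by `2 / (π r)`. Hence `|F'(0)| ≤ 4 / (π r)` for every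
`r < 1`.
-/

open Metric

/-- `u` is harmonic on the unit disc: it is `C²` there and its Laplacian
`u_{xx} + u_{yy}` vanishes at every point of the disc. -/
def HarmonicOnDisc {E : Type*} [NormedAddCommGroup E] [NormedSpace ℝ E] (u : ℂ → E) : Prop :=
  ContDiffOn ℝ 2 u (ball 0 1) ∧
  ∀ z ∈ ball (0 : ℂ) 1,
    fderiv ℝ (fun w => fderiv ℝ u w 1) z 1
      + fderiv ℝ (fun w => fderiv ℝ u w Complex.I) z Complex.I = 0

open Real Filter Topology InnerProductSpace

theorem HarmonicOnDisc.harmonicOnNhd {E : Type*} [NormedAddCommGroup E] [NormedSpace ℝ E]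
    {u : ℂ → E} (hu : HarmonicOnDisc u) : HarmonicOnNhd u (ball 0 1) := by
  have hC2 (z) (hz : z ∈ ball (0 : ℂ) 1) : ContDiffAt ℝ 2 u z :=
    hu.1.contDiffAt (isOpen_ball.mem_nhds hz)
  refine fun z hz => ⟨hC2 z hz, ?_⟩
  filter_upwards [isOpen_ball.mem_nhds hz] with w hw
  have hd : DifferentiableAt ℝ (fderiv ℝ u) w :=
    ((hC2 w hw).fderiv_right (m := 1) (by norm_num)).differentiableAt one_ne_zero
  have hlap := hu.2 w hw
  rw [fderiv_clm_apply hd (differentiableAt_const _),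
    fderiv_clm_apply hd (differentiableAt_const _)] at hlap
  simpa [laplacian_eq_iteratedFDeriv_complexPlane, iteratedFDeriv_two_apply] using hlap

theorem fderiv_apply_eq_re_deriv_mul {u : ℂ → ℝ} {F : ℂ → ℂ} {z : ℂ}
    (hu : u =ᶠ[𝓝 z] fun w => (F w).re) (hF : DifferentiableAt ℂ F z) (v : ℂ) :
    fderiv ℝ u z v = (deriv F z * v).re := by
  have hder : HasFDerivAt u
      (Complex.reCLM.comp ((ContinuousLinearMap.toSpanSingleton ℂ (deriv F z)).restrictScalars ℝ))
      z :=
    (Complex.reCLM.hasFDerivAt.comp z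
      (hF.hasDerivAt.hasFDerivAt.restrictScalars ℝ)).congr_of_eventuallyEq hu
  simp [hder.fderiv, mul_comm]

theorem sqrt_fderiv_sq_add_sq_eq_norm_deriv {u : ℂ → ℝ} {F : ℂ → ℂ} {z : ℂ}
    (hu : u =ᶠ[𝓝 z] fun w => (F w).re) (hF : DifferentiableAt ℂ F z) :
    √((fderiv ℝ u z 1) ^ 2 + (fderiv ℝ u z Complex.I) ^ 2) = ‖deriv F z‖ := by
  simp only [fderiv_apply_eq_re_deriv_mul hu hF, mul_one, Complex.mul_I_re, Complex.norm_def,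
    Complex.normSq_apply]
  ring_nf

theorem integral_abs_cos_add_pi (a : ℝ) : ∫ x in a..a + π, |cos x| = 2 := by
  have hper : Function.Periodic (fun x => |cos x|) π := fun x => by simp [cos_add_pi]
  rw [hper.intervalIntegral_add_eq a (-(π / 2)), show -(π / 2) + π = π / 2 by ring,
    intervalIntegral.integral_congr (g := cos)]
  · rw [integral_cos]
    norm_num
  · intro x hx
    rw [Set.uIcc_of_le (by linarith [pi_pos])] at hx
    exact abs_of_nonneg (cos_nonneg_of_mem_Icc hx)

theorem integral_abs_cos_add_two_pi (a : ℝ) : ∫ x in a..a + 2 * π, |cos x| = 4 := by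
  have hint (b c : ℝ) : IntervalIntegrable (fun x => |cos x|) MeasureTheory.volume b c :=
    continuous_cos.abs.intervalIntegrable b c
  rw [← intervalIntegral.integral_add_adjacent_intervals (hint a (a + π)) (hint _ _),
    show a + 2 * π = a + π + π by ring, integral_abs_cos_add_pi,
    integral_abs_cos_add_pi]
  norm_num

theorem integral_abs_cos_sub (β : ℝ) : ∫ θ in 0..2 * π, |cos (β - θ)| = 4 := by
  rw [intervalIntegral.integral_comp_sub_left (fun x => |cos x|) β, sub_zero]
  simpa using integral_abs_cos_add_two_pi (β - 2 * π)

section CircleAverage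

variable {c : ℂ} {R : ℝ}

theorem continuousOn_inv_sub_sphere (hR : R ≠ 0) :
    ContinuousOn (fun z : ℂ => (z - c)⁻¹) (sphere c R) :=
  (continuousOn_id.sub continuousOn_const).inv₀ fun _ hz =>
    sub_ne_zero.2 (ne_of_mem_sphere hz hR)

theorem circleAverage_abs_re_exp_mul_inv_sub (hR : 0 < R) (β : ℝ) :
    circleAverage (fun z => |(Complex.exp (β * Complex.I) * (z - c)⁻¹).re|) c R
      = 2 / (π * R) := by
  have hcos (θ : ℝ) : |(Complex.exp (β * Complex.I) * (circleMap c R θ - c)⁻¹).re|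
      = R⁻¹ * |cos (β - θ)| := by
    rw [circleMap_sub_center, circleMap_zero, mul_inv, ← Complex.exp_neg, mul_left_comm,
      ← Complex.exp_add, ← Complex.ofReal_inv, Complex.re_ofReal_mul,
      show β * Complex.I + -(θ * Complex.I) = ((β - θ : ℝ) : ℂ) * Complex.I by push_cast; ring,
      Complex.exp_ofReal_mul_I_re, abs_mul, abs_of_pos (inv_pos.2 hR)]
  rw [circleAverage_def, intervalIntegral.integral_congr (fun θ _ => hcos θ),
    intervalIntegral.integral_const_mul, integral_abs_cos_sub, smul_eq_mul]
  field_simp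
  ring

theorem norm_circleAverage_inv_sub_mul_le {f : ℂ → ℝ} (hR : 0 < R)
    (hf : ContinuousOn f (sphere c R)) (hf1 : ∀ z ∈ sphere c R, |f z| ≤ 1) :
    ‖circleAverage (fun z => (z - c)⁻¹ * f z) c R‖ ≤ 2 / (π * R) := by
  set A := circleAverage (fun z => (z - c)⁻¹ * f z) c R
  set w := Complex.exp ((-A.arg : ℝ) * Complex.I)
  have hinv := continuousOn_inv_sub_sphere (c := c) hR.ne'
  have hcont : ContinuousOn (fun z => w * ((z - c)⁻¹ * f z)) (sphere c |R|) := by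
    rw [abs_of_pos hR]
    exact continuousOn_const.mul (hinv.mul (Complex.continuous_ofReal.comp_continuousOn hf))
  have hweight : CircleIntegrable (fun z => |(w * (z - c)⁻¹).re|) c R := by
    refine ContinuousOn.circleIntegrable' ?_
    rw [abs_of_pos hR]
    exact (Complex.continuous_re.comp_continuousOn (continuousOn_const.mul hinv)).abs
  have hnorm : ‖A‖ = (w * A).re := by
    nth_rw 2 [← Complex.norm_mul_exp_arg_mul_I A]
    rw [mul_left_comm, ← Complex.exp_add, Complex.ofReal_neg, neg_mul, neg_add_cancel,
      Complex.exp_zero, mul_one, Complex.ofReal_re]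
  calc ‖A‖ = circleAverage (fun z => (w * ((z - c)⁻¹ * f z)).re) c R := by
        rw [hnorm, ← smul_eq_mul, ← circleAverage_fun_smul]
        exact (Complex.reCLM.circleAverage_comp_comm hcont.circleIntegrable').symm
    _ ≤ circleAverage (fun z => |(w * (z - c)⁻¹).re|) c R := by
        refine circleAverage_mono
          (Complex.continuous_re.comp_continuousOn hcont).circleIntegrable' hweight fun z hz => ?_
        rw [← mul_assoc, Complex.re_mul_ofReal, mul_comm]
        rw [abs_of_pos hR] at hz
        calc f z * (w * (z - c)⁻¹).re ≤ |f z| * |(w * (z - c)⁻¹).re| := by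
              rw [← abs_mul]; exact le_abs_self _
          _ ≤ |(w * (z - c)⁻¹).re| := mul_le_of_le_one_left (abs_nonneg _) (hf1 z hz)
    _ = 2 / (π * R) := circleAverage_abs_re_exp_mul_inv_sub hR _

theorem DiffContOnCl.circleAverage_inv_sub_smul {E : Type*} [NormedAddCommGroup E]
    [NormedSpace ℂ E] [CompleteSpace E] {f : ℂ → E} (hR : 0 < R)
    (hf : DiffContOnCl ℂ f (ball c R)) :
    Real.circleAverage (fun z => (z - c)⁻¹ • f z) c R = deriv f c := by
  rw [circleAverage_eq_circleIntegral hR.ne']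
  simp_rw [smul_smul, ← sq, inv_pow, ← one_div]
  rw [hf.deriv_eq_smul_circleIntegral hR, smul_smul, one_div_mul_cancel Complex.two_pi_I_ne_zero,
    one_smul]

theorem DiffContOnCl.circleAverage_inv_sub_mul_re {F : ℂ → ℂ} (hR : 0 < R)
    (hF : DiffContOnCl ℂ F (ball c R)) :
    Real.circleAverage (fun z => (z - c)⁻¹ * (F z).re) c R = deriv F c / 2 := by
  have hFs : ContinuousOn F (sphere c R) :=
    hF.continuousOn_ball.mono sphere_subset_closedBall
  have hinv := continuousOn_inv_sub_sphere (c := c) hR.ne'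
  have hG : DiffContOnCl ℂ (fun z => (z - c) * F z) (ball c |R|) := by
    rw [abs_of_pos hR]
    exact (differentiable_id.diffContOnCl.sub_const c).smul hF
  have hGs : ContinuousOn (fun z => (z - c) * F z) (sphere c |R|) := by
    rw [abs_of_pos hR]
    exact (continuousOn_id.sub continuousOn_const).mul hFs
  have hG0 : Real.circleAverage (fun z => (z - c) * F z) c R = 0 := by
    rw [hG.circleAverage]
    simp
  -- on the circle `(z - c)⁻¹ = conj (z - c) / R ^ 2`
  have hsplit : Set.EqOn (fun z => (z - c)⁻¹ * (F z).re)
      (fun z => (1 / 2 : ℂ) • ((z - c)⁻¹ • F z) +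
        (1 / (2 * R ^ 2) : ℂ) • Complex.conjCLE ((z - c) * F z)) (sphere c |R|) := by
    intro z hz
    rw [abs_of_pos hR, mem_sphere_iff_norm] at hz
    simp only [Complex.inv_def, Complex.normSq_eq_norm_sq, hz, Complex.re_eq_add_conj,
      smul_eq_mul, Complex.conjCLE_apply, map_mul, map_sub]
    push_cast
    field_simp
  have hconj := Complex.conjCLE.toContinuousLinearMap.circleAverage_comp_comm hGs.circleIntegrable'
  simp only [ContinuousLinearEquiv.coe_coe] at hconj
  rw [circleAverage_congr_sphere hsplit, circleAverage_fun_add, circleAverage_fun_smul,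
    circleAverage_fun_smul, hF.circleAverage_inv_sub_smul hR,
    ← Function.comp_def Complex.conjCLE, hconj, hG0]
  · simp [div_eq_inv_mul]
  · refine ContinuousOn.circleIntegrable' ?_
    rw [abs_of_pos hR]
    exact continuousOn_const.mul (hinv.mul hFs)
  · exact ContinuousOn.circleIntegrable'
      (continuousOn_const.mul (Complex.conjCLE.continuous.comp_continuousOn hGs))

theorem DiffContOnCl.norm_deriv_le_of_abs_re_le_one {F : ℂ → ℂ} (hR : 0 < R)
    (hF : DiffContOnCl ℂ F (ball c R)) (hre : ∀ z ∈ sphere c R, |(F z).re| ≤ 1) :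
    ‖deriv F c‖ ≤ 4 / (π * R) := by
  have h := norm_circleAverage_inv_sub_mul_le (f := fun z => (F z).re) hR
    (Complex.continuous_re.comp_continuousOn (hF.continuousOn_ball.mono sphere_subset_closedBall))
    hre
  rw [hF.circleAverage_inv_sub_mul_re hR, norm_div, Complex.norm_ofNat, div_le_iff₀ two_pos] at h
  calc ‖deriv F c‖ ≤ 2 / (π * R) * 2 := h
    _ = 4 / (π * R) := by ring

end CircleAverage

theorem stmt16 (u : ℂ → ℝ) (hu : HarmonicOnDisc u)
    (hbd : ∀ z ∈ ball (0 : ℂ) 1, |u z| < 1) :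
    Real.sqrt ((fderiv ℝ u 0 1) ^ 2 + (fderiv ℝ u 0 Complex.I) ^ 2) ≤ 4 / Real.pi := by
  obtain ⟨F, hFa, hFu⟩ := hu.harmonicOnNhd.exists_analyticOnNhd_ball_re_eq
  have hnhds : u =ᶠ[𝓝 0] fun w => (F w).re :=
    eventually_of_mem (ball_mem_nhds 0 one_pos) fun z hz => (hFu hz).symm
  rw [sqrt_fderiv_sq_add_sq_eq_norm_deriv hnhds (hFa 0 (mem_ball_self one_pos)).differentiableAt]
  have hbound (r : ℝ) (hr : r ∈ Set.Ioo 0 1) : ‖deriv F 0‖ ≤ 4 / (π * r) := by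
    have hsub : closedBall (0 : ℂ) r ⊆ ball 0 1 := closedBall_subset_ball hr.2
    refine DiffContOnCl.norm_deriv_le_of_abs_re_le_one hr.1
      (hFa.differentiableOn.mono ((closure_ball 0 hr.1.ne').subset.trans hsub)).diffContOnCl
      fun z hz => ?_
    have hz1 := hsub (sphere_subset_closedBall hz)
    simpa only [← hFu hz1] using (hbd z hz1).le
  have hlim : Tendsto (fun r => 4 / (π * r)) (𝓝[<] 1) (𝓝 (4 / π)) := by
    have hcont : ContinuousAt (fun r => 4 / (π * r)) 1 :=
      continuousAt_const.div (continuousAt_const.mul continuousAt_id) (by positivity)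
    simpa using hcont.tendsto.mono_left nhdsWithin_le_nhds
  exact ge_of_tendsto hlim (eventually_of_mem (Ioo_mem_nhdsLT one_pos) hbound)
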